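/- arXiv:1012.3610 — 5 statements merged into one kernel-verified Lean document; each statement's English description precedes it below -/
import Mathlib

section
/- For all real numbers M, N > 0 and all nonnegative reals a, b, and integer d ≥ 2, one has (M^(1/(d-1)) + N^(1/(d-1)))^(d-1) · (a/M + b/N) ≥ (a^(1/d) + b^(1/d))^d, with equality if and only if M · b^((d-1)/d) = N · a^((d-1)/d). -/
/-!
Put `θ = 1/d`, `x = a/M`, `y = b/N`, `α = M^(1/(d-1))`, `β = N^(1/(d-1))`. The left-hand side is
`((x + y)^θ (α + β)^(1-θ))^d`, and since `x^θ α^(1-θ) = a^(1/d)`, `y^θ β^(1-θ) = b^(1/d)`, the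
inequality is Hölder's inequality for two terms with exponents `d` and `d/(d-1)`, obtained by adding
the weighted AM-GM inequalities for `(x/(x+y), α/(α+β))` and `(y/(x+y), β/(α+β))`. Equality holds
iff `(x, y)` and `(α, β)` are proportional, i.e. `a N^(d/(d-1)) = b M^(d/(d-1))`; raising this to
the power `(d-1)/d` gives the stated condition.
-/

lemma one_div_sub_one_mul_one_sub_one_div {K : Type*} [Field K] {D : K} (hD : D ≠ 0)
    (hD1 : D ≠ 1) : 1 / (D - 1) * (1 - 1 / D) = 1 / D := by
  have : D - 1 ≠ 0 := sub_ne_zero.2 hD1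
  field_simp

lemma div_add_eq_div_add_and_div_add_eq_div_add_iff {K : Type*} [Field K] {x y α β : K}
    (hS : x + y ≠ 0) (hT : α + β ≠ 0) :
    (x / (x + y) = α / (α + β) ∧ y / (x + y) = β / (α + β)) ↔ x * β = y * α := by
  rw [div_eq_div_iff hS hT, div_eq_div_iff hS hT]
  constructor
  · rintro ⟨h, -⟩; linear_combination h
  · intro h; exact ⟨by linear_combination h, by linear_combination -h⟩

namespace Real

theorem rpow_mul_rpow_add_rpow_mul_rpow_le_and_eq_iff {θ x y α β : ℝ} (hθ₀ : 0 < θ)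
    (hθ₁ : θ < 1) (hx : 0 ≤ x) (hy : 0 ≤ y) (hα : 0 ≤ α) (hβ : 0 ≤ β) :
    x ^ θ * α ^ (1 - θ) + y ^ θ * β ^ (1 - θ) ≤ (x + y) ^ θ * (α + β) ^ (1 - θ) ∧
      (x ^ θ * α ^ (1 - θ) + y ^ θ * β ^ (1 - θ) = (x + y) ^ θ * (α + β) ^ (1 - θ) ↔
        x * β = y * α) := by
  have hθ' : 0 < 1 - θ := sub_pos.2 hθ₁
  rcases (add_nonneg hx hy).eq_or_lt with hS | hS
  · obtain ⟨rfl, rfl⟩ : x = 0 ∧ y = 0 := ⟨by linarith, by linarith⟩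
    simp [zero_rpow hθ₀.ne']
  rcases (add_nonneg hα hβ).eq_or_lt with hT | hT
  · obtain ⟨rfl, rfl⟩ : α = 0 ∧ β = 0 := ⟨by linarith, by linarith⟩
    simp [zero_rpow hθ'.ne']
  set P := (x + y) ^ θ * (α + β) ^ (1 - θ)
  have hP : 0 < P := by positivity
  have hw : θ + (1 - θ) = 1 := by ring
  have normalize : ∀ {u v : ℝ}, 0 ≤ u → 0 ≤ v →
      (u / (x + y)) ^ θ * (v / (α + β)) ^ (1 - θ) = u ^ θ * v ^ (1 - θ) / P := fun hu hv => by
    rw [div_rpow hu hS.le, div_rpow hv hT.le]; ring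
  have amgm_x := geom_mean_le_arith_mean2_weighted hθ₀.le hθ'.le
    (div_nonneg hx hS.le) (div_nonneg hα hT.le) hw
  have amgm_y := geom_mean_le_arith_mean2_weighted hθ₀.le hθ'.le
    (div_nonneg hy hS.le) (div_nonneg hβ hT.le) hw
  have sum_means : θ * (x / (x + y)) + (1 - θ) * (α / (α + β))
      + (θ * (y / (x + y)) + (1 - θ) * (β / (α + β))) = 1 := by
    field_simp; ring
  rw [normalize hx hα] at amgm_x
  rw [normalize hy hβ] at amgm_y
  have split_eq := add_eq_add_iff_eq_and_eq amgm_x amgm_y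
  rw [sum_means, ← add_div, div_eq_one_iff_eq hP.ne', ← normalize hx hα, ← normalize hy hβ,
    geom_mean_eq_arith_mean2_weighted_iff_of_pos hθ₀ hθ' (div_nonneg hx hS.le)
      (div_nonneg hα hT.le) hw,
    geom_mean_eq_arith_mean2_weighted_iff_of_pos hθ₀ hθ' (div_nonneg hy hS.le)
      (div_nonneg hβ hT.le) hw,
    div_add_eq_div_add_and_div_add_eq_div_add_iff hS.ne' hT.ne'] at split_eq
  refine ⟨(div_le_one hP).1 ?_, split_eq⟩
  calc _ = _ := add_div _ _ _
    _ ≤ _ := add_le_add amgm_x amgm_y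
    _ = 1 := sum_means

lemma rpow_rpow_of_mul_eq_one {M s r : ℝ} (hM : 0 ≤ M) (hsr : s * r = 1) :
    (M ^ s) ^ r = M := by
  rw [← rpow_mul hM, hsr, rpow_one]

lemma div_rpow_mul_rpow_rpow {a M s r t : ℝ} (ha : 0 ≤ a) (hM : 0 < M) (hsr : s * r = t) :
    (a / M) ^ t * (M ^ s) ^ r = a ^ t := by
  rw [← rpow_mul hM.le, hsr, div_rpow ha hM.le, div_mul_cancel₀]
  exact (rpow_pos_of_pos hM t).ne'

lemma rpow_sub_one_mul_eq_rpow {X Y D : ℝ} (hX : 0 ≤ X) (hY : 0 ≤ Y) (hD : D ≠ 0) :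
    Y ^ (D - 1) * X = (X ^ (1 / D) * Y ^ (1 - 1 / D)) ^ D := by
  rw [mul_rpow (rpow_nonneg hX _) (rpow_nonneg hY _), ← rpow_mul hX, ← rpow_mul hY,
    one_div_mul_cancel hD, rpow_one, sub_mul, one_div_mul_cancel hD, one_mul, mul_comm]

lemma div_mul_rpow_eq_div_mul_rpow_iff {a b M N D : ℝ} (ha : 0 ≤ a) (hb : 0 ≤ b)
    (hM : 0 < M) (hN : 0 < N) (hD : 1 < D) :
    a / M * N ^ (1 / (D - 1)) = b / N * M ^ (1 / (D - 1)) ↔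
      M * b ^ ((D - 1) / D) = N * a ^ ((D - 1) / D) := by
  have hD1 : D - 1 ≠ 0 := by linarith
  have hsr : (1 + 1 / (D - 1)) * ((D - 1) / D) = 1 := by field_simp; ring
  have hr : (D - 1) / D ≠ 0 := div_ne_zero hD1 (by linarith)
  calc a / M * N ^ (1 / (D - 1)) = b / N * M ^ (1 / (D - 1))
      ↔ a * N ^ (1 + 1 / (D - 1)) = b * M ^ (1 + 1 / (D - 1)) := by
        rw [rpow_add hN, rpow_add hM, rpow_one, rpow_one, div_mul_eq_mul_div, div_mul_eq_mul_div,
          div_eq_div_iff hM.ne' hN.ne']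
        constructor <;> intro h <;> linear_combination h
    _ ↔ (a * N ^ (1 + 1 / (D - 1))) ^ ((D - 1) / D)
          = (b * M ^ (1 + 1 / (D - 1))) ^ ((D - 1) / D) :=
        (rpow_left_inj (by positivity) (by positivity) hr).symm
    _ ↔ M * b ^ ((D - 1) / D) = N * a ^ ((D - 1) / D) := by
        rw [mul_rpow ha (by positivity), mul_rpow hb (by positivity),
          rpow_rpow_of_mul_eq_one hN.le hsr, rpow_rpow_of_mul_eq_one hM.le hsr,
          mul_comm M, mul_comm N]
        exact eq_comm

end Real

open Real

theorem bonnesen_vs_brunn_minkowski (d : ℕ) (hd : 2 ≤ d) (M N a b : ℝ)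
    (hM : 0 < M) (hN : 0 < N) (ha : 0 ≤ a) (hb : 0 ≤ b) :
    (M ^ ((1:ℝ)/((d:ℝ)-1)) + N ^ ((1:ℝ)/((d:ℝ)-1))) ^ ((d:ℝ)-1) * (a / M + b / N)
      ≥ (a ^ ((1:ℝ)/(d:ℝ)) + b ^ ((1:ℝ)/(d:ℝ))) ^ (d:ℝ)
    ∧ ((M ^ ((1:ℝ)/((d:ℝ)-1)) + N ^ ((1:ℝ)/((d:ℝ)-1))) ^ ((d:ℝ)-1) * (a / M + b / N)
        = (a ^ ((1:ℝ)/(d:ℝ)) + b ^ ((1:ℝ)/(d:ℝ))) ^ (d:ℝ)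
      ↔ M * b ^ (((d:ℝ)-1)/(d:ℝ)) = N * a ^ (((d:ℝ)-1)/(d:ℝ))) := by
  have hD : 1 < (d : ℝ) := Nat.one_lt_cast.2 hd
  set D : ℝ := (d : ℝ)
  have hD0 : 0 < D := by linarith
  have hsr := one_div_sub_one_mul_one_sub_one_div hD0.ne' hD.ne'
  obtain ⟨holder_le, holder_eq_iff⟩ := rpow_mul_rpow_add_rpow_mul_rpow_le_and_eq_iff
    (one_div_pos.2 hD0) ((div_lt_one hD0).2 hD) (div_nonneg ha hM.le) (div_nonneg hb hN.le)
    (rpow_nonneg hM.le (1 / (D - 1))) (rpow_nonneg hN.le (1 / (D - 1)))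
  rw [div_rpow_mul_rpow_rpow ha hM hsr, div_rpow_mul_rpow_rpow hb hN hsr] at holder_le holder_eq_iff
  rw [rpow_sub_one_mul_eq_rpow (by positivity) (by positivity) hD0.ne']
  refine ⟨rpow_le_rpow (by positivity) holder_le hD0.le, ?_⟩
  rw [rpow_left_inj (by positivity) (by positivity) hD0.ne', eq_comm, holder_eq_iff,
    div_mul_rpow_eq_div_mul_rpow_iff ha hb hM hN hD]
end

section
/- If {C_i} and {D_i} are sequences of convex bodies in ℝ^n converging in Hausdorff distance to convex bodies X and Y respectively, and for each i there exist α_i > 0 and x_i ∈ ℝ^n with D_i = α_i C_i + x_i, then X and Y are homothetic. -/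
open Filter Metric Bornology

def IsConvexBody {E : Type*} [NormedAddCommGroup E] [NormedSpace ℝ E] (A : Set E) : Prop :=
  Convex ℝ A ∧ IsCompact A ∧ (interior A).Nonempty

def Homothetic {E : Type*} [NormedAddCommGroup E] [NormedSpace ℝ E] (X Y : Set E) : Prop :=
  ∃ α : ℝ, 0 < α ∧ ∃ x : E, Y = (fun p => α • p + x) '' X

section Aux
variable {E : Type*} [NormedAddCommGroup E] [NormedSpace ℝ E]

lemma lip_map {α : ℝ} (hα : 0 ≤ α) (x : E) :
    LipschitzWith (Real.toNNReal α) (fun p : E => α • p + x) := by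
  apply LipschitzWith.of_dist_le_mul
  intro p q
  rw [dist_add_right, dist_smul₀, Real.norm_of_nonneg hα, Real.coe_toNNReal _ hα]

lemma diam_map {A : Set E} (hAb : IsBounded A) {α : ℝ} (hα : 0 ≤ α) (x : E) :
    Metric.diam ((fun p => α • p + x) '' A) = α * Metric.diam A := by
  have hIb : IsBounded ((fun p => α • p + x) '' A) := (lip_map hα x).isBounded_image hAb
  apply le_antisymm
  · apply Metric.diam_le_of_forall_dist_le (by positivity)
    rintro _ ⟨p, hp, rfl⟩ _ ⟨q, hq, rfl⟩
    rw [dist_add_right, dist_smul₀, Real.norm_of_nonneg hα]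
    exact mul_le_mul_of_nonneg_left (Metric.dist_le_diam_of_mem hAb hp hq) hα
  · rcases eq_or_lt_of_le hα with h | h
    · simp only [← h, zero_mul, zero_smul, zero_add]
      exact Metric.diam_nonneg
    rw [mul_comm, ← le_div_iff₀ h]
    apply Metric.diam_le_of_forall_dist_le (by positivity)
    intro p hp q hq
    rw [le_div_iff₀ h, mul_comm]
    have e : α * dist p q = dist (α • p + x) (α • q + x) := by
      rw [dist_add_right, dist_smul₀, Real.norm_of_nonneg hα]
    rw [e]
    exact Metric.dist_le_diam_of_mem hIb ⟨p, hp, rfl⟩ ⟨q, hq, rfl⟩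

lemma diam_le_of_haus {A B : Set E} (hA : A.Nonempty) (hAb : IsBounded A)
    (hB : B.Nonempty) (hBb : IsBounded B) {r : ℝ}
    (hr : Metric.hausdorffDist A B < r) :
    Metric.diam A ≤ Metric.diam B + 2 * r := by
  have hr0 : 0 < r := lt_of_le_of_lt Metric.hausdorffDist_nonneg hr
  have fin := Metric.hausdorffEdist_ne_top_of_nonempty_of_bounded hA hB hAb hBb
  apply Metric.diam_le_of_forall_dist_le (by positivity)
  intro p hp q hq
  obtain ⟨p', hp', hpp'⟩ := Metric.exists_dist_lt_of_hausdorffDist_lt hp hr fin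
  obtain ⟨q', hq', hqq'⟩ := Metric.exists_dist_lt_of_hausdorffDist_lt hq hr fin
  calc dist p q ≤ dist p p' + dist p' q' + dist q' q := dist_triangle4 p p' q' q
    _ ≤ Metric.diam B + 2 * r := by
        have h1 : dist p p' ≤ r := hpp'.le
        have h2 : dist p' q' ≤ Metric.diam B := Metric.dist_le_diam_of_mem hBb hp' hq'
        have h3 : dist q' q ≤ r := by rw [dist_comm]; exact hqq'.le
        linarith

lemma haus_map_bound {A X : Set E} (hA : A.Nonempty) (hAb : IsBounded A)
    (hXne : X.Nonempty) (hXb : IsBounded X)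
    {α β : ℝ} (hα : 0 ≤ α) (v w : E) {R : ℝ} (hR : ∀ p ∈ X, ‖p‖ ≤ R)
    {r : ℝ} (hr : Metric.hausdorffDist A X < r) :
    Metric.hausdorffDist ((fun p => α • p + v) '' A) ((fun p => β • p + w) '' X)
      ≤ α * r + |α - β| * R + ‖v - w‖ := by
  have hr0 : 0 < r := lt_of_le_of_lt Metric.hausdorffDist_nonneg hr
  have hR0 : 0 ≤ R := by
    obtain ⟨q, hq⟩ := hXne
    exact le_trans (norm_nonneg q) (hR q hq)
  have fin := Metric.hausdorffEdist_ne_top_of_nonempty_of_bounded hA hXne hAb hXb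
  have key : ∀ p q : E, q ∈ X → dist p q < r →
      dist (α • p + v) (β • q + w) ≤ α * r + |α - β| * R + ‖v - w‖ := by
    intro p q hq hpq
    calc dist (α • p + v) (β • q + w)
        ≤ dist (α • p + v) (α • q + v) + dist (α • q + v) (β • q + w) :=
          dist_triangle _ _ _
      _ ≤ α * r + (|α - β| * R + ‖v - w‖) := by
          apply add_le_add
          · rw [dist_add_right, dist_smul₀, Real.norm_of_nonneg hα]
            exact mul_le_mul_of_nonneg_left hpq.le hα
          · calc dist (α • q + v) (β • q + w)
                ≤ dist (α • q) (β • q) + dist v w := dist_add_add_le _ _ _ _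
              _ ≤ |α - β| * R + ‖v - w‖ := by
                  rw [dist_eq_norm, ← sub_smul, norm_smul, Real.norm_eq_abs,
                    dist_eq_norm]
                  gcongr
                  exact hR q hq
      _ = α * r + |α - β| * R + ‖v - w‖ := by ring
  apply Metric.hausdorffDist_le_of_mem_dist (by positivity)
  · rintro _ ⟨p, hp, rfl⟩
    obtain ⟨q, hq, hpq⟩ := Metric.exists_dist_lt_of_hausdorffDist_lt hp hr fin
    exact ⟨β • q + w, ⟨q, hq, rfl⟩, key p q hq hpq⟩
  · rintro _ ⟨q, hq, rfl⟩
    obtain ⟨p, hp, hpq⟩ := Metric.exists_dist_lt_of_hausdorffDist_lt' hq hr fin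
    exact ⟨α • p + v, ⟨p, hp, rfl⟩, by rw [dist_comm]; exact key p q hq hpq⟩

end Aux

theorem limit_of_homothetic_is_homothetic (n : ℕ)
    (C D : ℕ → Set (EuclideanSpace ℝ (Fin n))) (X Y : Set (EuclideanSpace ℝ (Fin n)))
    (hC : ∀ i, IsConvexBody (C i)) (hD : ∀ i, IsConvexBody (D i))
    (hX : IsConvexBody X) (hY : IsConvexBody Y)
    (hCX : Tendsto (fun i => Metric.hausdorffDist (C i) X) atTop (nhds 0))
    (hDY : Tendsto (fun i => Metric.hausdorffDist (D i) Y) atTop (nhds 0))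
    (hhom : ∀ i, ∃ α : ℝ, 0 < α ∧ ∃ x : EuclideanSpace ℝ (Fin n),
      D i = (fun p => α • p + x) '' (C i)) :
    Homothetic X Y := by
  -- basic facts
  have hXne : X.Nonempty := hX.2.2.mono interior_subset
  have hYne : Y.Nonempty := hY.2.2.mono interior_subset
  have hXb : IsBounded X := hX.2.1.isBounded
  have hYb : IsBounded Y := hY.2.1.isBounded
  have hCne : ∀ i, (C i).Nonempty := fun i => (hC i).2.2.mono interior_subset
  have hDne : ∀ i, (D i).Nonempty := fun i => (hD i).2.2.mono interior_subset
  have hCb : ∀ i, IsBounded (C i) := fun i => (hC i).2.1.isBounded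
  have hDb : ∀ i, IsBounded (D i) := fun i => (hD i).2.1.isBounded
  rcases subsingleton_or_nontrivial (EuclideanSpace ℝ (Fin n)) with hsub | hnt
  · -- trivial case: space is a single point
    refine ⟨1, one_pos, 0, ?_⟩
    obtain ⟨a, ha⟩ := hXne
    obtain ⟨b, hb⟩ := hYne
    have hXY : X = Y := by
      ext z
      constructor
      · intro _; rwa [Subsingleton.elim z b]
      · intro _; rwa [Subsingleton.elim z a]
    rw [← hXY]
    ext z
    simp only [Set.mem_image, one_smul, add_zero]
    exact ⟨fun hz => ⟨z, hz, rfl⟩, fun ⟨w, hw, he⟩ => he ▸ hw⟩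
  -- positive diameters
  have diam_pos : ∀ (A : Set (EuclideanSpace ℝ (Fin n))), IsBounded A → (interior A).Nonempty → 0 < Metric.diam A := by
    intro A hAb ⟨z, hz⟩
    obtain ⟨ε, hε, hball⟩ := Metric.mem_nhds_iff.mp (mem_interior_iff_mem_nhds.mp hz)
    obtain ⟨v, hv⟩ := exists_ne (0 : EuclideanSpace ℝ (Fin n))
    set w := z + (ε / 2 / ‖v‖) • v with hw
    have hvn : 0 < ‖v‖ := norm_pos_iff.mpr hv
    have hdist : dist w z = ε / 2 := by
      rw [dist_eq_norm, hw, add_sub_cancel_left, norm_smul, Real.norm_eq_abs,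
        abs_of_pos (by positivity), div_mul_cancel₀ _ hvn.ne']
    have hwX : w ∈ A := hball (by
      simp only [Metric.mem_ball, hdist]; linarith)
    have hzX : z ∈ A := interior_subset hz
    calc (0:ℝ) < ε / 2 := by linarith
      _ = dist w z := hdist.symm
      _ ≤ Metric.diam A := Metric.dist_le_diam_of_mem hAb hwX hzX
  have hdX : 0 < Metric.diam X := diam_pos X hXb hX.2.2
  have hdY : 0 < Metric.diam Y := diam_pos Y hYb hY.2.2
  set δX := Metric.diam X
  set δY := Metric.diam Y
  -- norm bounds on X and Y
  obtain ⟨RX, hRX⟩ := isBounded_iff_forall_norm_le.mp hXb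
  obtain ⟨RY, hRY⟩ := isBounded_iff_forall_norm_le.mp hYb
  have hRX0 : 0 ≤ RX := le_trans (norm_nonneg _) (hRX _ hXne.choose_spec)
  have hRY0 : 0 ≤ RY := le_trans (norm_nonneg _) (hRY _ hYne.choose_spec)
  -- choose the homothety data
  choose α hα x hDeq using hhom
  have hdiam : ∀ i, Metric.diam (D i) = α i * Metric.diam (C i) := by
    intro i
    rw [hDeq i, diam_map (hCb i) (hα i).le]
  -- bounds on the coefficients
  set a : ℝ := (δY / 2) / (δX + 2) with ha_def
  set b : ℝ := (δY + 2) / (δX / 2) with hb_def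
  have ha_pos : 0 < a := by positivity
  have hb_pos : 0 < b := by positivity
  set M : ℝ := RY + 1 + b * (RX + 1) with hM_def
  set εC : ℝ := min (δX / 4) 1 with hεC_def
  set εD : ℝ := min (δY / 4) 1 with hεD_def
  have hεC_pos : 0 < εC := lt_min (by linarith) one_pos
  have hεD_pos : 0 < εD := lt_min (by linarith) one_pos
  have hev : ∀ᶠ i in atTop, Metric.hausdorffDist (C i) X < εC ∧
      Metric.hausdorffDist (D i) Y < εD :=
    (hCX.eventually (gt_mem_nhds hεC_pos)).and (hDY.eventually (gt_mem_nhds hεD_pos))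
  -- in the eventual set, (α i, x i) lies in a compact set K
  set K : Set (ℝ × EuclideanSpace ℝ (Fin n)) := Set.Icc a b ×ˢ Metric.closedBall (0 : EuclideanSpace ℝ (Fin n)) M with hK_def
  have hmem : ∀ i, Metric.hausdorffDist (C i) X < εC → Metric.hausdorffDist (D i) Y < εD →
      (α i, x i) ∈ K := by
    intro i h1 h2
    have finC := Metric.hausdorffEdist_ne_top_of_nonempty_of_bounded (hCne i) hXne (hCb i) hXb
    have finD := Metric.hausdorffEdist_ne_top_of_nonempty_of_bounded (hDne i) hYne (hDb i) hYb
    -- diameter bounds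
    have hC_up : Metric.diam (C i) ≤ δX + 2 := by
      have := diam_le_of_haus (hCne i) (hCb i) hXne hXb h1
      have : Metric.diam (C i) ≤ δX + 2 * εC := this
      have hεC1 : εC ≤ 1 := min_le_right _ _
      linarith
    have hC_lo : δX / 2 ≤ Metric.diam (C i) := by
      have hsym : Metric.hausdorffDist X (C i) < εC := by
        rwa [Metric.hausdorffDist_comm]
      have := diam_le_of_haus hXne hXb (hCne i) (hCb i) hsym
      have hεC2 : εC ≤ δX / 4 := min_le_left _ _
      linarith
    have hD_up : Metric.diam (D i) ≤ δY + 2 := by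
      have := diam_le_of_haus (hDne i) (hDb i) hYne hYb h2
      have hεD1 : εD ≤ 1 := min_le_right _ _
      linarith
    have hD_lo : δY / 2 ≤ Metric.diam (D i) := by
      have hsym : Metric.hausdorffDist Y (D i) < εD := by
        rwa [Metric.hausdorffDist_comm]
      have := diam_le_of_haus hYne hYb (hDne i) (hDb i) hsym
      have hεD2 : εD ≤ δY / 4 := min_le_left _ _
      linarith
    have hCpos : 0 < Metric.diam (C i) := by linarith
    have hαi := hα i
    have heq := hdiam i
    have hα_lo : a ≤ α i := by
      rw [ha_def, div_le_iff₀ (by linarith)]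
      calc δY / 2 ≤ Metric.diam (D i) := hD_lo
        _ = α i * Metric.diam (C i) := heq
        _ ≤ α i * (δX + 2) := by
            exact mul_le_mul_of_nonneg_left hC_up hαi.le
    have hα_up : α i ≤ b := by
      rw [hb_def, le_div_iff₀ (by linarith)]
      calc α i * (δX / 2) ≤ α i * Metric.diam (C i) :=
            mul_le_mul_of_nonneg_left hC_lo hαi.le
        _ = Metric.diam (D i) := heq.symm
        _ ≤ δY + 2 := hD_up
    -- bound on x i
    obtain ⟨p, hp⟩ := hCne i
    have hpd : ∃ q ∈ X, dist p q < εC :=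
      Metric.exists_dist_lt_of_hausdorffDist_lt hp h1 finC
    obtain ⟨q, hq, hpq⟩ := hpd
    have hpn : ‖p‖ ≤ RX + 1 := by
      have : ‖p‖ ≤ ‖q‖ + dist p q := by
        rw [dist_eq_norm]
        calc ‖p‖ = ‖q + (p - q)‖ := by rw [add_sub_cancel]
          _ ≤ ‖q‖ + ‖p - q‖ := norm_add_le _ _
      have hεC1 : εC ≤ 1 := min_le_right _ _
      have := hRX q hq
      linarith
    have hdmem : α i • p + x i ∈ D i := by
      rw [hDeq i]; exact ⟨p, hp, rfl⟩
    obtain ⟨q', hq', hq'd⟩ :=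
      Metric.exists_dist_lt_of_hausdorffDist_lt hdmem h2 finD
    have hdn : ‖α i • p + x i‖ ≤ RY + 1 := by
      have : ‖α i • p + x i‖ ≤ ‖q'‖ + dist (α i • p + x i) q' := by
        rw [dist_eq_norm]
        calc ‖α i • p + x i‖ = ‖q' + (α i • p + x i - q')‖ := by rw [add_sub_cancel]
          _ ≤ ‖q'‖ + ‖α i • p + x i - q'‖ := norm_add_le _ _
      have hεD1 : εD ≤ 1 := min_le_right _ _
      have := hRY q' hq'
      linarith
    have hxn : ‖x i‖ ≤ M := by
      have h3 : ‖x i‖ ≤ ‖α i • p + x i‖ + ‖α i • p‖ := by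
        have e : (α i • p + x i) - α i • p = x i := by abel
        have := norm_sub_le (α i • p + x i) (α i • p)
        rwa [e] at this
      have h4 : ‖α i • p‖ = α i * ‖p‖ := by
        rw [norm_smul, Real.norm_of_nonneg hαi.le]
      have h5 : α i * ‖p‖ ≤ b * (RX + 1) := by
        apply mul_le_mul hα_up hpn (norm_nonneg _) hb_pos.le
      rw [hM_def]
      rw [h4] at h3
      linarith
    exact ⟨⟨hα_lo, hα_up⟩, Metric.mem_closedBall.mpr (by
      rw [dist_zero_right]; exact hxn)⟩
  have hfreq : ∃ᶠ i in atTop, (α i, x i) ∈ K :=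
    (hev.mono fun i ⟨h1, h2⟩ => hmem i h1 h2).frequently
  have hKb : IsBounded K := (isBounded_Icc a b).prod isBounded_closedBall
  obtain ⟨⟨α₀, x₀⟩, hmemK, φ, hφ, hconv⟩ :=
    tendsto_subseq_of_frequently_bounded hKb hfreq
  have hKcl : closure K = K :=
    ((isClosed_Icc).prod Metric.isClosed_closedBall).closure_eq
  rw [hKcl] at hmemK
  have hα₀ : 0 < α₀ := lt_of_lt_of_le ha_pos hmemK.1.1
  -- the limit sets
  set f : EuclideanSpace ℝ (Fin n) → EuclideanSpace ℝ (Fin n) := fun p => α₀ • p + x₀ with hf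
  set T : Set (EuclideanSpace ℝ (Fin n)) := f '' X with hT
  have hfc : Continuous f := by
    rw [hf]; exact (continuous_id.const_smul α₀).add continuous_const
  have hTc : IsCompact T := hX.2.1.image hfc
  have hTne : T.Nonempty := hXne.image f
  have hTb : IsBounded T := hTc.isBounded
  -- component convergence
  have hαconv : Tendsto (fun k => α (φ k)) atTop (nhds α₀) :=
    (continuous_fst.tendsto _).comp hconv
  have hxconv : Tendsto (fun k => x (φ k)) atTop (nhds x₀) :=
    (continuous_snd.tendsto _).comp hconv
  have hCXφ : Tendsto (fun k => Metric.hausdorffDist (C (φ k)) X) atTop (nhds 0) :=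
    hCX.comp (hφ.tendsto_atTop)
  have hDYφ : Tendsto (fun k => Metric.hausdorffDist (D (φ k)) Y) atTop (nhds 0) :=
    hDY.comp (hφ.tendsto_atTop)
  -- D (φ k) converges to T
  have hbound : ∀ k, Metric.hausdorffDist (D (φ k)) T ≤
      α (φ k) * (Metric.hausdorffDist (C (φ k)) X + 1 / (k + 1)) +
      |α (φ k) - α₀| * RX + ‖x (φ k) - x₀‖ := by
    intro k
    have hrlt : Metric.hausdorffDist (C (φ k)) X <
        Metric.hausdorffDist (C (φ k)) X + 1 / (k + 1) := by
      have : (0:ℝ) < 1 / (k + 1) := by positivity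
      linarith
    have := haus_map_bound (hCne (φ k)) (hCb (φ k)) hXne hXb
      (hα (φ k)).le (x (φ k)) (w := x₀) (β := α₀) hRX hrlt
    rw [hDeq (φ k)]
    exact this
  have hg : Tendsto (fun k => α (φ k) * (Metric.hausdorffDist (C (φ k)) X + 1 / ((k:ℝ) + 1)) +
      |α (φ k) - α₀| * RX + ‖x (φ k) - x₀‖) atTop (nhds 0) := by
    have h1 : Tendsto (fun k : ℕ => 1 / ((k:ℝ) + 1)) atTop (nhds 0) :=
      tendsto_one_div_add_atTop_nhds_zero_nat
    have h2 : Tendsto (fun k => α (φ k) * (Metric.hausdorffDist (C (φ k)) X + 1 / ((k:ℝ) + 1)))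
        atTop (nhds (α₀ * (0 + 0))) := hαconv.mul (hCXφ.add h1)
    have h3 : Tendsto (fun k => |α (φ k) - α₀| * RX) atTop (nhds (|α₀ - α₀| * RX)) :=
      ((hαconv.sub tendsto_const_nhds).abs).mul tendsto_const_nhds
    have h4 : Tendsto (fun k => ‖x (φ k) - x₀‖) atTop (nhds ‖x₀ - x₀‖) :=
      ((hxconv.sub tendsto_const_nhds).norm)
    have := (h2.add h3).add h4
    simpa using this
  have hDT : Tendsto (fun k => Metric.hausdorffDist (D (φ k)) T) atTop (nhds 0) :=
    squeeze_zero (fun k => Metric.hausdorffDist_nonneg) hbound hg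
  -- conclude hausdorffDist T Y = 0
  have hTY : Metric.hausdorffDist T Y = 0 := by
    have hle : ∀ k, Metric.hausdorffDist T Y ≤
        Metric.hausdorffDist T (D (φ k)) + Metric.hausdorffDist (D (φ k)) Y := by
      intro k
      exact Metric.hausdorffDist_triangle
        (Metric.hausdorffEdist_ne_top_of_nonempty_of_bounded hTne (hDne (φ k)) hTb (hDb (φ k)))
    have hsum : Tendsto (fun k => Metric.hausdorffDist T (D (φ k)) +
        Metric.hausdorffDist (D (φ k)) Y) atTop (nhds 0) := by
      have h := (hDT.add hDYφ).congr (fun k => by rw [Metric.hausdorffDist_comm])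
      simpa using h
    have h0 : Metric.hausdorffDist T Y ≤ 0 := ge_of_tendsto' hsum hle
    exact le_antisymm h0 Metric.hausdorffDist_nonneg
  have finTY := Metric.hausdorffEdist_ne_top_of_nonempty_of_bounded hTne hYne hTb hYb
  have : T = Y := (IsClosed.hausdorffDist_zero_iff_eq hTc.isClosed hY.2.1.isClosed finTY).mp hTY
  exact ⟨α₀, hα₀, x₀, this.symm⟩
end

section
/- Let m, n > 0 and let f : [0,m] → ℝ≥0 and g : [0,n] → ℝ≥0 be concave functions. Let A = {(y,x) : x ∈ [0,m], 0 ≤ y ≤ f(x)} ⊆ ℝ² and B = {(y,x) : x ∈ [0,n], 0 ≤ y ≤ g(x)} ⊆ ℝ². Then |A+B| ≥ (m+n)(|A|/m + |B|/n) + Δ, where Δ = (n·f(m) − (n/m)·∫₀^m f) + (m·g(0) − (m/n)·∫₀^n g). -/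
open MeasureTheory Pointwise

/-- A nonnegative concave function on `[0,a]` is bounded by `2 * h (a/2)`. -/
lemma concave_bound {a : ℝ} (ha : 0 < a) {h : ℝ → ℝ}
    (hcon : ConcaveOn ℝ (Set.Icc 0 a) h) (h0 : ∀ x ∈ Set.Icc (0:ℝ) a, 0 ≤ h x) :
    ∀ x ∈ Set.Icc (0:ℝ) a, h x ≤ 2 * h (a / 2) := by
  intro x hx
  obtain ⟨hx0, hxa⟩ := hx
  have hmem : a / 2 ∈ Set.Icc (0:ℝ) a := ⟨by linarith, by linarith⟩
  have h0a : (0:ℝ) ∈ Set.Icc (0:ℝ) a := ⟨le_refl _, ha.le⟩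
  have haa : a ∈ Set.Icc (0:ℝ) a := ⟨ha.le, le_refl _⟩
  rcases le_or_gt x (a / 2) with hle | hlt
  · rcases eq_or_lt_of_le hle with heq | hlt'
    · subst heq; linarith [h0 _ hmem]
    · set t : ℝ := (a / 2) / (a - x) with ht
      have hax : 0 < a - x := by linarith
      have ht0 : 0 < t := by positivity
      have ht1 : t ≤ 1 := by rw [div_le_one hax]; linarith
      have htkey := hcon.2 ⟨hx0, hxa⟩ haa ht0.le (by linarith : (0:ℝ) ≤ 1 - t) (by ring)
      have hmul : t * (a - x) = a / 2 := div_mul_cancel₀ _ hax.ne'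
      have hcomb : t • x + (1 - t) • a = a / 2 := by
        simp only [smul_eq_mul]
        linear_combination -hmul
      rw [hcomb] at htkey
      have ht12 : 1 / 2 ≤ t := by
        rw [ht, le_div_iff₀ hax]; linarith
      have e1 : 0 ≤ (1 - t) * h a := mul_nonneg (by linarith) (h0 _ haa)
      have e2 : (1/2) * h x ≤ t * h x := mul_le_mul_of_nonneg_right ht12 (h0 _ ⟨hx0, hxa⟩)
      simp only [smul_eq_mul] at htkey
      linarith
  · set t : ℝ := (a / 2) / x with ht
    have hx0' : 0 < x := by linarith
    have ht0 : 0 < t := by positivity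
    have ht1 : t ≤ 1 := by rw [div_le_one hx0']; linarith
    have htkey := hcon.2 h0a ⟨hx0, hxa⟩ (by linarith : (0:ℝ) ≤ 1 - t) ht0.le (by ring)
    have hmul : t * x = a / 2 := div_mul_cancel₀ _ hx0'.ne'
    have hcomb : (1 - t) • (0:ℝ) + t • x = a / 2 := by
      simp only [smul_eq_mul]
      linear_combination hmul
    rw [hcomb] at htkey
    have ht12 : 1 / 2 ≤ t := by
      rw [ht, le_div_iff₀ hx0']; linarith
    have e1 : 0 ≤ (1 - t) * h 0 := mul_nonneg (by linarith) (h0 _ h0a)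
    have e2 : (1/2) * h x ≤ t * h x := mul_le_mul_of_nonneg_right ht12 (h0 _ ⟨hx0, hxa⟩)
    simp only [smul_eq_mul] at htkey
    linarith

lemma concave_aemeasurable {a : ℝ} {h : ℝ → ℝ}
    (hcon : ConcaveOn ℝ (Set.Icc 0 a) h) :
    AEMeasurable h (volume.restrict (Set.Icc (0:ℝ) a)) := by
  have hc : ContinuousOn h (Set.Ioo 0 a) := by
    have := hcon.continuousOn_interior
    rwa [interior_Icc] at this
  have := hc.aemeasurable (μ := volume) measurableSet_Ioo
  rwa [Measure.restrict_congr_set Ioo_ae_eq_Icc] at this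

lemma concave_integrableOn {a : ℝ} (ha : 0 < a) {h : ℝ → ℝ}
    (hcon : ConcaveOn ℝ (Set.Icc 0 a) h) (h0 : ∀ x ∈ Set.Icc (0:ℝ) a, 0 ≤ h x) :
    IntegrableOn h (Set.Icc (0:ℝ) a) volume := by
  refine ⟨(concave_aemeasurable hcon).aestronglyMeasurable, ?_⟩
  apply HasFiniteIntegral.restrict_of_bounded (C := 2 * h (a / 2)) measure_Icc_lt_top
  filter_upwards [ae_restrict_mem measurableSet_Icc] with x hx
  rw [Real.norm_eq_abs, abs_of_nonneg (h0 x hx)]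
  exact concave_bound ha hcon h0 x hx

/-- Volume of the region under a nonnegative concave function. -/
lemma region_volume {a : ℝ} (ha : 0 < a) {h : ℝ → ℝ}
    (hcon : ConcaveOn ℝ (Set.Icc 0 a) h) (h0 : ∀ x ∈ Set.Icc (0:ℝ) a, 0 ≤ h x) :
    volume {p : ℝ × ℝ | p.2 ∈ Set.Icc 0 a ∧ 0 ≤ p.1 ∧ p.1 ≤ h p.2}
      = ENNReal.ofReal (∫ x in (0:ℝ)..a, h x) := by
  have haem := concave_aemeasurable hcon
  have hint := concave_integrableOn ha hcon h0
  obtain ⟨h', h'meas, hh'⟩ := haem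
  -- the set of points where h and h' differ, within Icc, is null
  have hNnull : volume.restrict (Set.Icc (0:ℝ) a) {x | h x ≠ h' x} = 0 := hh'
  set N' := toMeasurable (volume.restrict (Set.Icc (0:ℝ) a)) {x | h x ≠ h' x} with hN'
  have hN'null : volume.restrict (Set.Icc (0:ℝ) a) N' = 0 := by
    rw [hN', measure_toMeasurable]; exact hNnull
  have hN'meas : MeasurableSet N' := measurableSet_toMeasurable _ _
  have hNsub : {x | h x ≠ h' x} ⊆ N' := subset_toMeasurable _ _
  have hbad : volume (N' ∩ Set.Icc (0:ℝ) a) = 0 := by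
    rwa [Measure.restrict_apply hN'meas] at hN'null
  set R := {p : ℝ × ℝ | p.2 ∈ Set.Icc 0 a ∧ 0 ≤ p.1 ∧ p.1 ≤ h p.2} with hR
  set R' := {p : ℝ × ℝ | p.2 ∈ Set.Icc 0 a ∧ 0 ≤ p.1 ∧ p.1 ≤ h' p.2} with hR'def
  have hbadprod : volume ((Set.univ : Set ℝ) ×ˢ (N' ∩ Set.Icc (0:ℝ) a)) = 0 := by
    rw [Measure.volume_eq_prod, Measure.prod_prod, hbad, mul_zero]
  have hRR' : volume R = volume R' := by
    apply measure_congr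
    rw [MeasureTheory.ae_eq_set]
    constructor
    · apply measure_mono_null _ hbadprod
      rintro ⟨y, x⟩ ⟨⟨hx, hy0, hyh⟩, hnot⟩
      refine ⟨Set.mem_univ _, ?_, hx⟩
      by_contra hcontra
      have : h x = h' x := by
        by_contra hne; exact hcontra (hNsub hne)
      exact hnot ⟨hx, hy0, this ▸ hyh⟩
    · apply measure_mono_null _ hbadprod
      rintro ⟨y, x⟩ ⟨⟨hx, hy0, hyh⟩, hnot⟩
      refine ⟨Set.mem_univ _, ?_, hx⟩
      by_contra hcontra
      have : h x = h' x := by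
        by_contra hne; exact hcontra (hNsub hne)
      exact hnot ⟨hx, hy0, this ▸ hyh⟩
  have hR'meas : MeasurableSet R' := by
    refine MeasurableSet.inter ?_ (MeasurableSet.inter ?_ ?_)
    · exact measurable_snd measurableSet_Icc
    · exact measurableSet_le measurable_const measurable_fst
    · exact measurableSet_le measurable_fst (h'meas.comp measurable_snd)
  rw [hRR', Measure.volume_eq_prod, Measure.prod_apply_symm hR'meas]
  have hslice : ∀ x : ℝ, volume ((fun y => (y, x)) ⁻¹' R')
      = (Set.Icc (0:ℝ) a).indicator (fun x => ENNReal.ofReal (h' x)) x := by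
    intro x
    by_cases hx : x ∈ Set.Icc (0:ℝ) a
    · have : (fun y => (y, x)) ⁻¹' R' = Set.Icc 0 (h' x) := by
        ext y
        constructor
        · rintro ⟨_, h1, h2⟩; exact ⟨h1, h2⟩
        · rintro ⟨h1, h2⟩; exact ⟨hx, h1, h2⟩
      rw [this, Real.volume_Icc, Set.indicator_of_mem hx, sub_zero]
    · have : (fun y => (y, x)) ⁻¹' R' = ∅ := by
        ext y
        constructor
        · rintro ⟨h1, _⟩; exact absurd h1 hx
        · intro hy; exact absurd hy (Set.notMem_empty y)
      rw [this, measure_empty, Set.indicator_of_notMem hx]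
  rw [lintegral_congr hslice, lintegral_indicator measurableSet_Icc _]
  have hlint : ∫⁻ x in Set.Icc (0:ℝ) a, ENNReal.ofReal (h' x)
      = ∫⁻ x in Set.Icc (0:ℝ) a, ENNReal.ofReal (h x) := by
    apply lintegral_congr_ae
    filter_upwards [hh'] with x hx
    rw [hx]
  rw [hlint]
  rw [← MeasureTheory.ofReal_integral_eq_lintegral_ofReal hint]
  · rw [MeasureTheory.integral_Icc_eq_integral_Ioc, intervalIntegral.integral_of_le ha.le]
  · filter_upwards [ae_restrict_mem measurableSet_Icc] with x hx
    exact h0 x hx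

lemma region_convex {a : ℝ} {h : ℝ → ℝ} (hcon : ConcaveOn ℝ (Set.Icc 0 a) h) :
    Convex ℝ {p : ℝ × ℝ | p.2 ∈ Set.Icc 0 a ∧ 0 ≤ p.1 ∧ p.1 ≤ h p.2} := by
  rintro ⟨p1, p2⟩ ⟨hp2, hp10, hp1h⟩ ⟨q1, q2⟩ ⟨hq2, hq10, hq1h⟩ s t hs ht hst
  have hkey := hcon.2 hp2 hq2 hs ht hst
  refine ⟨hcon.1 hp2 hq2 hs ht hst, ?_, ?_⟩
  · have : (0:ℝ) ≤ s * p1 + t * q1 := by positivity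
    simpa using this
  · simp only [Prod.smul_mk, Prod.mk_add_mk, smul_eq_mul] at hkey ⊢
    calc s * p1 + t * q1 ≤ s * h p2 + t * h q2 := by
          apply add_le_add (mul_le_mul_of_nonneg_left hp1h hs)
            (mul_le_mul_of_nonneg_left hq1h ht)
      _ ≤ h (s * p2 + t * q2) := hkey

theorem epigraph_sumset_lower_bound (m n : ℝ) (hm : 0 < m) (hn : 0 < n)
    (f g : ℝ → ℝ)
    (hf : ConcaveOn ℝ (Set.Icc 0 m) f) (hg : ConcaveOn ℝ (Set.Icc 0 n) g)
    (hf0 : ∀ x ∈ Set.Icc (0:ℝ) m, 0 ≤ f x) (hg0 : ∀ x ∈ Set.Icc (0:ℝ) n, 0 ≤ g x)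
    (A B : Set (ℝ × ℝ))
    (hA : A = {p : ℝ × ℝ | p.2 ∈ Set.Icc 0 m ∧ 0 ≤ p.1 ∧ p.1 ≤ f p.2})
    (hB : B = {p : ℝ × ℝ | p.2 ∈ Set.Icc 0 n ∧ 0 ≤ p.1 ∧ p.1 ≤ g p.2}) :
    (volume (A + B)).toReal ≥
      (m + n) * ((volume A).toReal / m + (volume B).toReal / n)
      + ((n * f m - (n / m) * ∫ x in (0:ℝ)..m, f x)
        + (m * g 0 - (m / n) * ∫ x in (0:ℝ)..n, g x)) := by
  subst hA hB
  set A := {p : ℝ × ℝ | p.2 ∈ Set.Icc 0 m ∧ 0 ≤ p.1 ∧ p.1 ≤ f p.2} with hA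
  set B := {p : ℝ × ℝ | p.2 ∈ Set.Icc 0 n ∧ 0 ≤ p.1 ∧ p.1 ≤ g p.2} with hB
  have hg00 : 0 ≤ g 0 := hg0 0 ⟨le_refl _, hn.le⟩
  have hfm : 0 ≤ f m := hf0 m ⟨hm.le, le_refl _⟩
  set IA := ∫ x in (0:ℝ)..m, f x with hIAdef
  set IB := ∫ x in (0:ℝ)..n, g x with hIBdef
  have hIA : 0 ≤ IA := intervalIntegral.integral_nonneg hm.le hf0
  have hIB : 0 ≤ IB := intervalIntegral.integral_nonneg hn.le hg0
  have vA : volume A = ENNReal.ofReal IA := region_volume hm hf hf0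
  have vB : volume B = ENNReal.ofReal IB := region_volume hn hg hg0
  -- pieces of A + B
  set T1 := {p : ℝ × ℝ | p.2 ∈ Set.Icc 0 m ∧ 0 ≤ p.1 ∧ p.1 ≤ f p.2 + g 0} with hT1
  set T2 := Set.Icc (0:ℝ) (f m) ×ˢ Set.Ioc m (m + n) with hT2
  set T3 := (fun p : ℝ × ℝ => (f m, m) + p) '' B with hT3
  have hfgcon : ConcaveOn ℝ (Set.Icc 0 m) (fun x => f x + g 0) := hf.add_const _
  have hfg0 : ∀ x ∈ Set.Icc (0:ℝ) m, 0 ≤ f x + g 0 := fun x hx =>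
    add_nonneg (hf0 x hx) hg00
  have hfint : IntervalIntegrable f volume 0 m :=
    (intervalIntegrable_iff_integrableOn_Icc_of_le hm.le).mpr
      (concave_integrableOn hm hf hf0)
  have vT1 : volume T1 = ENNReal.ofReal (IA + m * g 0) := by
    rw [hT1, region_volume hm hfgcon hfg0]
    congr 1
    rw [intervalIntegral.integral_add hfint intervalIntegrable_const,
      intervalIntegral.integral_const]
    simp [hIAdef]
  have vT2 : volume T2 = ENNReal.ofReal (n * f m) := by
    rw [hT2, Measure.volume_eq_prod, Measure.prod_prod, Real.volume_Icc, Real.volume_Ioc]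
    rw [← ENNReal.ofReal_mul (by linarith)]
    congr 1
    ring
  have vT3 : volume T3 = ENNReal.ofReal IB := by
    rw [hT3, Set.image_add_left, measure_preimage_add, vB]
  -- subset facts
  have hsub : T1 ∪ (T2 ∪ T3) ⊆ A + B := by
    rintro ⟨y, x⟩ (h1 | (h2 | h3))
    · obtain ⟨hx, hy0, hyfg⟩ := h1
      have hfx0 : 0 ≤ f x := hf0 x hx
      have hAm : (min y (f x), x) ∈ A := by
        refine ⟨hx, ?_, ?_⟩
        · show 0 ≤ min y (f x); exact le_min hy0 hfx0
        · show min y (f x) ≤ f x; exact min_le_right _ _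
      have hBm : (y - min y (f x), (0:ℝ)) ∈ B := by
        refine ⟨⟨le_refl _, hn.le⟩, ?_, ?_⟩
        · show 0 ≤ y - min y (f x)
          have := min_le_left y (f x); linarith
        · show y - min y (f x) ≤ g 0
          rcases le_total y (f x) with h | h
          · rw [min_eq_left h]; linarith
          · rw [min_eq_right h]; linarith
      refine Set.mem_add.mpr ⟨_, hAm, _, hBm, ?_⟩
      rw [Prod.mk_add_mk, Prod.mk.injEq]
      constructor <;> ring
    · obtain ⟨hy, hx⟩ := h2
      obtain ⟨hy1, hy2⟩ : 0 ≤ y ∧ y ≤ f m := hy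
      obtain ⟨hx1, hx2⟩ : m < x ∧ x ≤ m + n := hx
      have hAm : (y, m) ∈ A := ⟨⟨hm.le, le_refl _⟩, hy1, hy2⟩
      have hBm : ((0:ℝ), x - m) ∈ B := by
        refine ⟨⟨?_, ?_⟩, le_refl _, ?_⟩
        · show (0:ℝ) ≤ x - m; linarith
        · show x - m ≤ n; linarith
        · show (0:ℝ) ≤ g (x - m)
          exact hg0 _ ⟨by linarith, by linarith⟩
      refine Set.mem_add.mpr ⟨_, hAm, _, hBm, ?_⟩
      rw [Prod.mk_add_mk, Prod.mk.injEq]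
      constructor <;> ring
    · obtain ⟨b, hb, hbeq⟩ := h3
      exact Set.mem_add.mpr ⟨(f m, m), ⟨⟨hm.le, le_refl _⟩, hfm, le_refl _⟩, b, hb, hbeq⟩
  -- null measurability and a.e. disjointness
  have nmT2 : NullMeasurableSet T2 volume :=
    (measurableSet_Icc.prod measurableSet_Ioc).nullMeasurableSet
  have hBconv : Convex ℝ B := region_convex hg
  have nmT3 : NullMeasurableSet T3 volume := (hBconv.translate _).nullMeasurableSet _
  have hd23 : volume (T2 ∩ T3) = 0 := by
    apply measure_mono_null (t := ({f m} : Set ℝ) ×ˢ (Set.univ : Set ℝ))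
    · rintro ⟨y, x⟩ ⟨h2, h3⟩
      obtain ⟨b, hb, hbeq⟩ := h3
      have hb1 : 0 ≤ b.1 := hb.2.1
      have heq : f m + b.1 = y ∧ m + b.2 = x := by
        simpa [Prod.ext_iff] using hbeq
      constructor
      · have : y ≤ f m := h2.1.2
        simp only [Set.mem_singleton_iff]
        linarith [heq.1]
      · trivial
    · rw [Measure.volume_eq_prod, Measure.prod_prod, Real.volume_singleton, zero_mul]
  have hd1 : volume (T1 ∩ (T2 ∪ T3)) = 0 := by
    apply measure_mono_null (t := (Set.univ : Set ℝ) ×ˢ ({m} : Set ℝ))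
    · rintro ⟨y, x⟩ ⟨h1, h23⟩
      refine ⟨trivial, ?_⟩
      simp only [Set.mem_singleton_iff]
      have hxm : x ≤ m := h1.1.2
      rcases h23 with h2 | h3
      · exact absurd h2.2.1 (not_lt.mpr hxm)
      · obtain ⟨b, hb, hbeq⟩ := h3
        have hb2 : 0 ≤ b.2 := hb.1.1
        have heq : f m + b.1 = y ∧ m + b.2 = x := by
          simpa [Prod.ext_iff] using hbeq
        linarith [heq.2]
    · rw [Measure.volume_eq_prod, Measure.prod_prod, Real.volume_singleton, mul_zero]
  have key : ENNReal.ofReal (IA + m * g 0) + ENNReal.ofReal (n * f m)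
      + ENNReal.ofReal IB ≤ volume (A + B) := by
    calc ENNReal.ofReal (IA + m * g 0) + ENNReal.ofReal (n * f m) + ENNReal.ofReal IB
        = volume T1 + (volume T2 + volume T3) := by rw [vT1, vT2, vT3]; ring
      _ = volume T1 + volume (T2 ∪ T3) := by rw [measure_union₀ nmT3 hd23]
      _ = volume (T1 ∪ (T2 ∪ T3)) := (measure_union₀ (nmT2.union nmT3) hd1).symm
      _ ≤ volume (A + B) := measure_mono hsub
  -- finiteness of volume (A + B)
  have hbound : A + B ⊆ Set.Icc (0:ℝ) (2 * f (m/2) + 2 * g (n/2)) ×ˢ Set.Icc (0:ℝ) (m + n) := by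
    rintro p ⟨a, ha, b, hb, rfl⟩
    have ha1 := concave_bound hm hf hf0 a.2 ha.1
    have hb1 := concave_bound hn hg hg0 b.2 hb.1
    refine ⟨⟨add_nonneg ha.2.1 hb.2.1, ?_⟩, ⟨add_nonneg ha.1.1 hb.1.1, ?_⟩⟩
    · have := ha.2.2; have := hb.2.2
      simp only [Prod.fst_add]
      linarith
    · have := ha.1.2; have := hb.1.2
      simp only [Prod.snd_add]
      linarith
  have hfin : volume (A + B) ≠ ⊤ := by
    apply ne_top_of_le_ne_top _ (measure_mono hbound)
    rw [Measure.volume_eq_prod, Measure.prod_prod]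
    exact ENNReal.mul_ne_top (by simp [Real.volume_Icc]) (by simp [Real.volume_Icc])
  have key2 : IA + m * g 0 + n * f m + IB ≤ (volume (A + B)).toReal := by
    have h1 : ENNReal.ofReal (IA + m * g 0 + n * f m + IB) ≤ volume (A + B) := by
      rw [ENNReal.ofReal_add (by nlinarith) hIB, ENNReal.ofReal_add (by nlinarith)
        (by nlinarith : (0:ℝ) ≤ n * f m)]
      exact key
    calc IA + m * g 0 + n * f m + IB
        = (ENNReal.ofReal (IA + m * g 0 + n * f m + IB)).toReal := by
          rw [ENNReal.toReal_ofReal (by nlinarith)]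
      _ ≤ (volume (A + B)).toReal := ENNReal.toReal_mono hfin h1
  rw [ge_iff_le, vA, vB, ENNReal.toReal_ofReal hIA, ENNReal.toReal_ofReal hIB]
  have harith : (m + n) * (IA / m + IB / n) + (n * f m - (n / m) * IA + (m * g 0 - (m / n) * IB))
      = IA + m * g 0 + n * f m + IB := by
    field_simp
    ring
  linarith [key2, harith.le, harith.ge]
end

section
/- Let m, n > 0 and let f : [0,m] → ℝ≥0 and g : [0,n] → ℝ≥0 be concave functions whose right derivatives satisfy f'₊(x) ≥ g'₊(y) + ε for all x ∈ [0,m) and y ∈ [0,n), where ε ≥ 0. Let A and B be the regions under the graphs of f and g respectively. Then |A+B| ≥ (m+n)(|A|/m + |B|/n) + (mn/2)·ε. -/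
/-!
Cut `A + B` along the line of abscissa `t ∈ [0, m + n]` and split `t = x + y` in the ratio `m : n`.
The section contains `[0, f x + g y]`. Moving a length `δ < min (m - x) y` from `y` to `x` raises
`f x + g y` by at least `ε δ`: on `[x, x + δ]` the concave `f` grows at rate at least `f'₊(x + δ)`,
while on `[y - δ, y]` the concave `g` grows at rate at most `g'₊(y - δ) ≤ f'₊(x + δ) - ε`.
Integrating the resulting section length over `t`, with `x = m t / (m + n)` and `y = n t / (m + n)`,
gives `(m + n)/m ∫ f + (m + n)/n ∫ g + ε m n / 2`, while `|A| ≤ ∫ f` and `|B| ≤ ∫ g`.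
-/

open MeasureTheory Pointwise Set Filter Topology

def underGraph (s : Set ℝ) (f : ℝ → ℝ) : Set (ℝ × ℝ) :=
  {p | p.2 ∈ s ∧ 0 ≤ p.1 ∧ p.1 ≤ f p.2}

namespace ConcaveOn

variable {S T : Set ℝ} {f g : ℝ → ℝ} {a b x y f' g' : ℝ}

lemma le_slope_of_hasDerivWithinAt_Ioi_right (hf : ConcaveOn ℝ S f) (hx : x ∈ S) (hb : b ∈ S)
    (hxy : x < y) (hyb : y < b) (hf' : HasDerivWithinAt f f' (Ioi y) y) :
    f' ≤ slope f x y := by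
  apply le_of_tendsto <| (hasDerivWithinAt_iff_tendsto_slope' self_notMem_Ioi).mp hf'
  filter_upwards [Ioo_mem_nhdsGT hyb] with z hz
  have hzS : z ∈ S := hf.1.ordConnected.out hx hb ⟨(hxy.trans hz.1).le, hz.2.le⟩
  rw [slope_def_field, slope_def_field]
  exact hf.slope_anti_adjacent hx hzS hxy hz.1

lemma add_add_mul_le_of_rightDeriv_gap {ε δ : ℝ} (hf : ConcaveOn ℝ S f) (hg : ConcaveOn ℝ T g)
    (hx : x ∈ S) (hb : b ∈ S) (hxb : x + δ < b) (hδ : 0 < δ) (hy : y ∈ T) (hyδ : y - δ ∈ T)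
    (hf' : HasDerivWithinAt f f' (Ioi (x + δ)) (x + δ))
    (hg' : HasDerivWithinAt g g' (Ioi (y - δ)) (y - δ)) (hgap : g' + ε ≤ f') :
    f x + g y + ε * δ ≤ f (x + δ) + g (y - δ) := by
  have hfδ := hf.le_slope_of_hasDerivWithinAt_Ioi_right hx hb (by linarith) hxb hf'
  have hgδ := hg.slope_le_of_hasDerivWithinAt_Ioi hyδ hy (by linarith) hg'
  rw [slope_def_field, add_sub_cancel_left, le_div_iff₀ hδ] at hfδ
  rw [slope_def_field, sub_sub_cancel, div_le_iff₀ hδ] at hgδ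
  nlinarith

lemma le_two_mul_apply_midpoint (hf : ConcaveOn ℝ (Icc a b) f) (hf0 : ∀ x ∈ Icc a b, 0 ≤ f x)
    (hx : x ∈ Icc a b) : f x ≤ 2 * f ((a + b) / 2) := by
  have hx' : a + b - x ∈ Icc a b := ⟨by linarith [hx.2], by linarith [hx.1]⟩
  have hmid := hf.2 hx hx' (by norm_num : (0 : ℝ) ≤ 1 / 2) (by norm_num : (0 : ℝ) ≤ 1 / 2)
    (by norm_num)
  rw [smul_eq_mul, smul_eq_mul, smul_eq_mul, smul_eq_mul,
    show 1 / 2 * x + 1 / 2 * (a + b - x) = (a + b) / 2 by ring] at hmid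
  linarith [hf0 _ hx']

lemma isBounded_underGraph (hf : ConcaveOn ℝ (Icc a b) f) (hf0 : ∀ x ∈ Icc a b, 0 ≤ f x) :
    Bornology.IsBounded (underGraph (Icc a b) f) :=
  ((Metric.isBounded_Icc 0 (2 * f ((a + b) / 2))).prod (Metric.isBounded_Icc a b)).subset
    fun _ hp => ⟨⟨hp.2.1, hp.2.2.trans (hf.le_two_mul_apply_midpoint hf0 hp.1)⟩, hp.1⟩

lemma integrableOn_Icc (hf : ConcaveOn ℝ (Icc a b) f) (hf0 : ∀ x ∈ Icc a b, 0 ≤ f x) :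
    IntegrableOn f (Icc a b) := by
  rw [integrableOn_Icc_iff_integrableOn_Ioo]
  have hcont : ContinuousOn f (Ioo a b) := by
    simpa only [interior_Icc] using hf.continuousOn_interior
  refine .of_bound measure_Ioo_lt_top (hcont.aestronglyMeasurable measurableSet_Ioo)
    (2 * f ((a + b) / 2)) ?_
  filter_upwards [ae_restrict_mem measurableSet_Ioo] with x hx
  rw [Real.norm_of_nonneg (hf0 x (Ioo_subset_Icc_self hx))]
  exact hf.le_two_mul_apply_midpoint hf0 (Ioo_subset_Icc_self hx)

lemma intervalIntegrable (hab : a ≤ b) (hf : ConcaveOn ℝ (Icc a b) f)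
    (hf0 : ∀ x ∈ Icc a b, 0 ≤ f x) : IntervalIntegrable f volume a b :=
  (intervalIntegrable_iff_integrableOn_Icc_of_le hab).2 (hf.integrableOn_Icc hf0)

end ConcaveOn

section Volume

variable {s : Set ℝ} {φ : ℝ → ℝ}

lemma volume_swap_preimage (R : Set (ℝ × ℝ)) : volume (Prod.swap ⁻¹' R) = volume R :=
  (show MeasurePreserving MeasurableEquiv.prodComm ((volume : Measure ℝ).prod volume)
    ((volume : Measure ℝ).prod volume) from Measure.measurePreserving_swap).measure_preimage_equiv R

lemma ofReal_setIntegral_le_volume (hs : MeasurableSet s) (hφ : IntegrableOn φ s)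
    (hφ0 : ∀ t ∈ s, 0 ≤ φ t) {D : Set (ℝ × ℝ)}
    (hD : ∀ t ∈ s, ∀ c, 0 < c → c < φ t → (c, t) ∈ D) :
    ENNReal.ofReal (∫ t in s, φ t) ≤ volume D :=
  calc ENNReal.ofReal (∫ t in s, φ t) = ∫⁻ t in s, ENNReal.ofReal (φ t) :=
        ofReal_integral_eq_lintegral_ofReal hφ (ae_restrict_of_forall_mem hs hφ0)
    _ = volume (regionBetween 0 φ s) := by
        rw [Measure.volume_eq_prod, volume_regionBetween_eq_lintegral
          (f := 0) aemeasurable_const hφ.aemeasurable hs, sub_zero]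
    _ = volume (Prod.swap ⁻¹' regionBetween 0 φ s) := (volume_swap_preimage _).symm
    _ ≤ volume D := measure_mono fun p hp => hD _ hp.1 _ hp.2.1 hp.2.2

lemma volume_underGraph_le (hs : MeasurableSet s) (hμs : volume s ≠ ⊤) (hφ : IntegrableOn φ s)
    (hφ0 : ∀ t ∈ s, 0 ≤ φ t) :
    volume (underGraph s φ) ≤ ENNReal.ofReal (∫ t in s, φ t) := by
  have hthicken : ∀ c > 0, volume (underGraph s φ) ≤
      ENNReal.ofReal (∫ t in s, φ t) + ENNReal.ofReal (2 * c) * volume s := by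
    intro c hc
    calc volume (underGraph s φ)
        ≤ volume (Prod.swap ⁻¹' regionBetween (fun _ => -c) (fun t => φ t + c) s) :=
          measure_mono fun p hp =>
            ⟨hp.1, show -c < p.1 by linarith [hp.2.1], show p.1 < φ p.2 + c by linarith [hp.2.2]⟩
      _ = ∫⁻ t in s, ENNReal.ofReal (φ t + 2 * c) := by
          rw [volume_swap_preimage, Measure.volume_eq_prod,
            volume_regionBetween_eq_lintegral aemeasurable_const
              (hφ.aemeasurable.add_const c) hs]
          congr! 3 with t
          simp only [Pi.sub_apply]
          ring
      _ ≤ ∫⁻ t in s, (ENNReal.ofReal (φ t) + ENNReal.ofReal (2 * c)) :=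
          lintegral_mono fun _ => ENNReal.ofReal_add_le
      _ = ENNReal.ofReal (∫ t in s, φ t) + ENNReal.ofReal (2 * c) * volume s := by
          rw [lintegral_add_right _ measurable_const, setLIntegral_const,
            ofReal_integral_eq_lintegral_ofReal hφ (ae_restrict_of_forall_mem hs hφ0)]
  have hlim : Tendsto (fun c : ℝ => ENNReal.ofReal (∫ t in s, φ t) +
      ENNReal.ofReal (2 * c) * volume s) (𝓝[>] 0) (𝓝 (ENNReal.ofReal (∫ t in s, φ t))) := by
    have h2c : Tendsto (fun c : ℝ => ENNReal.ofReal (2 * c)) (𝓝 0) (𝓝 0) := by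
      simpa only [Function.comp_def, mul_zero, ENNReal.ofReal_zero] using
        (ENNReal.continuous_ofReal.comp (continuous_const_mul 2)).tendsto 0
    simpa using (tendsto_const_nhds.add
      (ENNReal.Tendsto.mul_const h2c (Or.inr hμs))).mono_left nhdsWithin_le_nhds
  exact ge_of_tendsto hlim (eventually_nhdsWithin_of_forall hthicken)

lemma ConcaveOn.toReal_volume_underGraph_le {a b : ℝ} {f : ℝ → ℝ} (hab : a ≤ b)
    (hf : ConcaveOn ℝ (Icc a b) f) (hf0 : ∀ x ∈ Icc a b, 0 ≤ f x) :
    (volume (underGraph (Icc a b) f)).toReal ≤ ∫ x in a..b, f x := by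
  rw [intervalIntegral.integral_of_le hab, ← integral_Icc_eq_integral_Ioc]
  exact ENNReal.toReal_le_of_le_ofReal (setIntegral_nonneg measurableSet_Icc hf0)
    (volume_underGraph_le measurableSet_Icc measure_Icc_lt_top.ne (hf.integrableOn_Icc hf0) hf0)

end Volume


section Profile

variable {m n ε : ℝ} {f g : ℝ → ℝ}

lemma intervalIntegrable_comp_div_mul {a s : ℝ} (ha : 0 < a)
    (hf : IntervalIntegrable f volume 0 a) :
    IntervalIntegrable (fun t => f (a / s * t)) volume 0 s := by
  simpa [div_div_cancel₀ ha.ne'] using hf.comp_mul_left (c := a / s)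

lemma integral_comp_div_mul {a s : ℝ} (ha : 0 < a) (hs : 0 < s) :
    ∫ t in 0..s, f (a / s * t) = s / a * ∫ x in 0..a, f x := by
  rw [intervalIntegral.integral_comp_mul_left _ (div_pos ha hs).ne', mul_zero,
    div_mul_cancel₀ _ hs.ne', inv_div, smul_eq_mul]

lemma integral_min_sub_div_mul (hm : 0 < m) (hn : 0 < n) :
    ∫ t in 0..(m + n), min (m - m / (m + n) * t) (n / (m + n) * t) = m * n / 2 := by
  have hs : 0 < m + n := add_pos hm hn
  have hsplit : ∀ t, m / (m + n) * t + n / (m + n) * t = t := fun t => by field_simp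
  have hcont : Continuous fun t => min (m - m / (m + n) * t) (n / (m + n) * t) := by fun_prop
  have hleft : EqOn (fun t => min (m - m / (m + n) * t) (n / (m + n) * t))
      (fun t => n / (m + n) * t) (uIcc 0 m) := fun t ht => by
    rw [uIcc_of_le hm.le] at ht
    exact min_eq_right (by linarith [hsplit t, ht.2])
  have hright : EqOn (fun t => min (m - m / (m + n) * t) (n / (m + n) * t))
      (fun t => m - m / (m + n) * t) (uIcc m (m + n)) := fun t ht => by
    rw [uIcc_of_le (by linarith)] at ht
    exact min_eq_left (by linarith [hsplit t, ht.1])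
  rw [← intervalIntegral.integral_add_adjacent_intervals (b := m) (hcont.intervalIntegrable _ _)
    (hcont.intervalIntegrable _ _), intervalIntegral.integral_congr hleft,
    intervalIntegral.integral_congr hright, intervalIntegral.integral_const_mul,
    intervalIntegral.integral_sub intervalIntegrable_const
      ((continuous_const_mul _).intervalIntegrable _ _),
    intervalIntegral.integral_const_mul, integral_id, intervalIntegral.integral_const, integral_id,
    smul_eq_mul]
  field_simp
  ring

end Profile

section SliceBound

variable {m n ε : ℝ} {f g : ℝ → ℝ}

noncomputable def sliceBound (m n ε : ℝ) (f g : ℝ → ℝ) (t : ℝ) : ℝ :=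
  f (m / (m + n) * t) + g (n / (m + n) * t) + ε * min (m - m / (m + n) * t) (n / (m + n) * t)

lemma intervalIntegrable_sliceBound (hm : 0 < m) (hn : 0 < n)
    (hf : IntervalIntegrable f volume 0 m) (hg : IntervalIntegrable g volume 0 n) :
    IntervalIntegrable (sliceBound m n ε f g) volume 0 (m + n) :=
  ((intervalIntegrable_comp_div_mul hm hf).add (intervalIntegrable_comp_div_mul hn hg)).add
    (Continuous.intervalIntegrable (by fun_prop) _ _)

lemma integral_sliceBound (hm : 0 < m) (hn : 0 < n)
    (hf : IntervalIntegrable f volume 0 m) (hg : IntervalIntegrable g volume 0 n) :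
    ∫ t in 0..(m + n), sliceBound m n ε f g t =
      (m + n) / m * (∫ x in 0..m, f x) + (m + n) / n * (∫ y in 0..n, g y) + ε * (m * n / 2) := by
  have hs : 0 < m + n := add_pos hm hn
  unfold sliceBound
  rw [intervalIntegral.integral_add ((intervalIntegrable_comp_div_mul hm hf).add
      (intervalIntegrable_comp_div_mul hn hg)) (Continuous.intervalIntegrable (by fun_prop) _ _),
    intervalIntegral.integral_add (intervalIntegrable_comp_div_mul hm hf)
      (intervalIntegrable_comp_div_mul hn hg),
    integral_comp_div_mul hm hs, integral_comp_div_mul hn hs,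
    intervalIntegral.integral_const_mul, integral_min_sub_div_mul hm hn]

lemma div_mul_mem_Icc {a s t : ℝ} (ha : 0 ≤ a) (ht : t ∈ Icc 0 s) : a / s * t ∈ Icc 0 a := by
  rw [div_mul_eq_mul_div, mul_div_assoc]
  exact ⟨mul_nonneg ha (div_nonneg ht.1 (ht.1.trans ht.2)),
    mul_le_of_le_one_right ha (div_le_one_of_le₀ ht.2 (ht.1.trans ht.2))⟩

lemma sliceBound_nonneg (hε : 0 ≤ ε) (hm : 0 ≤ m) (hn : 0 ≤ n)
    (hf0 : ∀ x ∈ Icc (0:ℝ) m, 0 ≤ f x) (hg0 : ∀ x ∈ Icc (0:ℝ) n, 0 ≤ g x) {t : ℝ}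
    (ht : t ∈ Icc 0 (m + n)) : 0 ≤ sliceBound m n ε f g t := by
  have hx := div_mul_mem_Icc hm ht
  have hy := div_mul_mem_Icc hn ht
  have hmin : 0 ≤ min (m - m / (m + n) * t) (n / (m + n) * t) := le_min (by linarith [hx.2]) hy.1
  unfold sliceBound
  linarith [hf0 _ hx, hg0 _ hy, mul_nonneg hε hmin]

end SliceBound

section Sumset

variable {m n ε : ℝ} {f g f' g' : ℝ → ℝ}

lemma mk_add_mem_underGraph_add {s t : Set ℝ} {x y c : ℝ} (hx : x ∈ s) (hy : y ∈ t)
    (hfx : 0 ≤ f x) (hgy : 0 ≤ g y) (hc : 0 ≤ c) (hcfg : c ≤ f x + g y) :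
    (c, x + y) ∈ underGraph s f + underGraph t g := by
  refine ⟨(min c (f x), x), ⟨hx, le_min hc hfx, min_le_right _ _⟩,
    (c - min c (f x), y), ⟨hy, sub_nonneg.2 (min_le_left _ _), ?_⟩, by simp⟩
  rcases le_total c (f x) with h | h
  · simpa [min_eq_left h] using hgy
  · rw [min_eq_right h]; linarith

lemma mk_add_mem_underGraph_add_of_lt (hf : ConcaveOn ℝ (Icc 0 m) f)
    (hg : ConcaveOn ℝ (Icc 0 n) g)
    (hf0 : ∀ x ∈ Icc (0:ℝ) m, 0 ≤ f x) (hg0 : ∀ x ∈ Icc (0:ℝ) n, 0 ≤ g x)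
    (hf' : ∀ x ∈ Ico (0:ℝ) m, HasDerivWithinAt f (f' x) (Ici x) x)
    (hg' : ∀ y ∈ Ico (0:ℝ) n, HasDerivWithinAt g (g' y) (Ici y) y)
    (hgap : ∀ x ∈ Ico (0:ℝ) m, ∀ y ∈ Ico (0:ℝ) n, f' x ≥ g' y + ε)
    {x y c : ℝ} (hx : x ∈ Icc 0 m) (hy : y ∈ Icc 0 n) (hc : 0 ≤ c)
    (hcx : c < f x + g y + ε * min (m - x) y) :
    (c, x + y) ∈ underGraph (Icc 0 m) f + underGraph (Icc 0 n) g := by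
  rcases le_or_gt c (f x + g y) with hle | hgt
  · exact mk_add_mem_underGraph_add hx hy (hf0 x hx) (hg0 y hy) hc hle
  have hmin : 0 ≤ min (m - x) y := le_min (by linarith [hx.2]) hy.1
  have hε : 0 < ε := pos_of_mul_pos_left (by linarith) hmin
  set δ := (c - (f x + g y)) / ε
  have hδ : 0 < δ := div_pos (by linarith) hε
  have hδmin : δ < min (m - x) y := by rw [div_lt_iff₀' hε]; linarith
  have hxδ : x + δ ∈ Ico 0 m := ⟨by linarith [hx.1], by linarith [min_le_left (m - x) y]⟩
  have hyδ : y - δ ∈ Ico 0 n := ⟨by linarith [min_le_right (m - x) y], by linarith [hy.2]⟩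
  have hgain := hf.add_add_mul_le_of_rightDeriv_gap hg hx (right_mem_Icc.2 (hx.1.trans hx.2))
    hxδ.2 hδ hy (Ico_subset_Icc_self hyδ) ((hf' _ hxδ).mono Ioi_subset_Ici_self)
    ((hg' _ hyδ).mono Ioi_subset_Ici_self) (hgap _ hxδ _ hyδ)
  have hεδ : ε * δ = c - (f x + g y) := mul_div_cancel₀ _ hε.ne'
  have hmem := mk_add_mem_underGraph_add (Ico_subset_Icc_self hxδ) (Ico_subset_Icc_self hyδ)
    (hf0 _ (Ico_subset_Icc_self hxδ)) (hg0 _ (Ico_subset_Icc_self hyδ)) hc (by linarith)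
  rwa [add_add_sub_cancel] at hmem

lemma integral_sliceBound_le_toReal_volume_add (hm : 0 < m) (hn : 0 < n) (hε : 0 ≤ ε)
    (hf : ConcaveOn ℝ (Icc 0 m) f) (hg : ConcaveOn ℝ (Icc 0 n) g)
    (hf0 : ∀ x ∈ Icc (0:ℝ) m, 0 ≤ f x) (hg0 : ∀ x ∈ Icc (0:ℝ) n, 0 ≤ g x)
    (hf' : ∀ x ∈ Ico (0:ℝ) m, HasDerivWithinAt f (f' x) (Ici x) x)
    (hg' : ∀ y ∈ Ico (0:ℝ) n, HasDerivWithinAt g (g' y) (Ici y) y)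
    (hgap : ∀ x ∈ Ico (0:ℝ) m, ∀ y ∈ Ico (0:ℝ) n, f' x ≥ g' y + ε) :
    ∫ t in 0..(m + n), sliceBound m n ε f g t ≤
      (volume (underGraph (Icc 0 m) f + underGraph (Icc 0 n) g)).toReal := by
  have hs : 0 < m + n := add_pos hm hn
  have hfin : volume (underGraph (Icc 0 m) f + underGraph (Icc 0 n) g) ≠ ⊤ :=
    ((hf.isBounded_underGraph hf0).add (hg.isBounded_underGraph hg0)).measure_lt_top.ne
  rw [intervalIntegral.integral_of_le hs.le, ← ENNReal.ofReal_le_iff_le_toReal hfin]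
  refine ofReal_setIntegral_le_volume measurableSet_Ioc
    ((intervalIntegrable_iff_integrableOn_Ioc_of_le hs.le).1 (intervalIntegrable_sliceBound hm hn
      (hf.intervalIntegrable hm.le hf0) (hg.intervalIntegrable hn.le hg0)))
    (fun t ht => sliceBound_nonneg hε hm.le hn.le hf0 hg0 (Ioc_subset_Icc_self ht))
    fun t ht c hc hct => ?_
  have hmem := mk_add_mem_underGraph_add_of_lt hf hg hf0 hg0 hf' hg' hgap
    (div_mul_mem_Icc hm.le (Ioc_subset_Icc_self ht)) (div_mul_mem_Icc hn.le (Ioc_subset_Icc_self ht))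
    hc.le hct
  rwa [← add_mul, ← add_div, div_self hs.ne', one_mul] at hmem

end Sumset

theorem epigraph_sumset_slope_gap_bound (m n ε : ℝ) (hm : 0 < m) (hn : 0 < n) (hε : 0 ≤ ε)
    (f g f' g' : ℝ → ℝ)
    (hf : ConcaveOn ℝ (Set.Icc 0 m) f) (hg : ConcaveOn ℝ (Set.Icc 0 n) g)
    (hf0 : ∀ x ∈ Set.Icc (0:ℝ) m, 0 ≤ f x) (hg0 : ∀ x ∈ Set.Icc (0:ℝ) n, 0 ≤ g x)
    (hf' : ∀ x ∈ Set.Ico (0:ℝ) m, HasDerivWithinAt f (f' x) (Set.Ici x) x)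
    (hg' : ∀ y ∈ Set.Ico (0:ℝ) n, HasDerivWithinAt g (g' y) (Set.Ici y) y)
    (hgap : ∀ x ∈ Set.Ico (0:ℝ) m, ∀ y ∈ Set.Ico (0:ℝ) n, f' x ≥ g' y + ε)
    (A B : Set (ℝ × ℝ))
    (hA : A = {p : ℝ × ℝ | p.2 ∈ Set.Icc 0 m ∧ 0 ≤ p.1 ∧ p.1 ≤ f p.2})
    (hB : B = {p : ℝ × ℝ | p.2 ∈ Set.Icc 0 n ∧ 0 ≤ p.1 ∧ p.1 ≤ g p.2}) :
    (volume (A + B)).toReal ≥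
      (m + n) * ((volume A).toReal / m + (volume B).toReal / n) + (m * n / 2) * ε := by
  change A = underGraph (Icc 0 m) f at hA
  change B = underGraph (Icc 0 n) g at hB
  subst hA hB
  have hslices := integral_sliceBound_le_toReal_volume_add hm hn hε hf hg hf0 hg0 hf' hg' hgap
  rw [integral_sliceBound hm hn (hf.intervalIntegrable hm.le hf0)
    (hg.intervalIntegrable hn.le hg0)] at hslices
  have hA := hf.toReal_volume_underGraph_le hm.le hf0
  have hB := hg.toReal_volume_underGraph_le hn.le hg0
  calc (m + n) * ((volume (underGraph (Icc 0 m) f)).toReal / m +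
          (volume (underGraph (Icc 0 n) g)).toReal / n) + m * n / 2 * ε
      = (m + n) / m * (volume (underGraph (Icc 0 m) f)).toReal +
          (m + n) / n * (volume (underGraph (Icc 0 n) g)).toReal + ε * (m * n / 2) := by ring
    _ ≤ (m + n) / m * (∫ x in 0..m, f x) + (m + n) / n * (∫ y in 0..n, g y) + ε * (m * n / 2) := by
        gcongr
    _ ≤ _ := hslices
end

section
/- Let A ⊆ ℝ² be a convex body and H = ℝ·e₀ the horizontal axis. Suppose A is translated so that |H ∩ A| = sup{|(x + H) ∩ A| : x ∈ ℝ²}, i.e., the horizontal slice through the origin has maximal length. Then there exists a linear map π : ℝ² → ℝ² with π(ℝ²) = H and π(A) = H ∩ A. -/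
/-!
Every horizontal chord of `A` has length at most `b - a`, the length of the maximal slice
`[a, b] × {0}`. Hence the interior of `A` misses the translate `A + (b - a, 0)`, and Hahn–Banach
separates the two by a functional `f` with `f (1, 0) = 1` that varies by at most `b - a` on `A`.
As `f (a, 0) = a` and `f (b, 0) = b`, it maps `A` into `[a, b]`, and the projection along `ker f`,
`p ↦ (f p, 0)`, does the job.
-/

open MeasureTheory

open Set Filter Topology
open scoped Pointwise

section Width

variable {E : Type*} [TopologicalSpace E] [AddCommGroup E] [Module ℝ E]
  [IsTopologicalAddGroup E] [ContinuousSMul ℝ E] {A : Set E} {v : E} {w : ℝ}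

theorem disjoint_interior_vadd_of_chord_le (hchord : ∀ x ∈ A, ∀ t : ℝ, x + t • v ∈ A → t ≤ w) :
    Disjoint (interior A) ((w • v) +ᵥ A) := by
  refine disjoint_left.2 fun z hz hzA => ?_
  obtain ⟨y, hy, hyz⟩ := mem_vadd_set.1 hzA
  have hnhds : ∀ᶠ δ in 𝓝[>] (0 : ℝ), z + δ • v ∈ A := by
    have hcont : Tendsto (fun δ : ℝ => z + δ • v) (𝓝 0) (𝓝 z) := by
      simpa using (tendsto_const_nhds (x := z)).add ((tendsto_id (x := 𝓝 (0 : ℝ))).smul_const v)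
    exact nhdsWithin_le_nhds (hcont.eventually (mem_interior_iff_mem_nhds.1 hz))
  obtain ⟨δ, hδA, hδ⟩ := (hnhds.and self_mem_nhdsWithin).exists
  have hshift : y + (w + δ) • v = z + δ • v := by
    rw [← hyz, vadd_eq_add, add_smul]
    abel
  linarith [hchord y hy _ (hshift ▸ hδA), show (0 : ℝ) < δ from hδ]

theorem exists_width_le_of_chord_le (hconv : Convex ℝ A) (hint : (interior A).Nonempty)
    (hchord : ∀ x ∈ A, ∀ t : ℝ, x + t • v ∈ A → t ≤ w) :
    ∃ f : StrongDual ℝ E, f v = 1 ∧ ∀ x ∈ A, ∀ y ∈ A, f x ≤ f y + w := by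
  obtain ⟨g, u, hg_int, hg_shift⟩ := geometric_hahn_banach_open hconv.interior isOpen_interior
    (hconv.vadd (w • v)) (disjoint_interior_vadd_of_chord_le hchord)
  have hg_le : ∀ x ∈ A, g x ≤ u := by
    refine fun x hx => closure_minimal (fun x hx => (hg_int x hx).le)
      (isClosed_Iic.preimage g.continuous) ?_
    rw [hconv.closure_interior_eq_closure_of_nonempty_interior hint]
    exact subset_closure hx
  have hg_ge : ∀ y ∈ A, u ≤ w * g v + g y := fun y hy => by
    simpa using hg_shift _ (vadd_mem_vadd_set hy)
  obtain ⟨z, hz⟩ := hint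
  have hw : 0 ≤ w := hchord z (interior_subset hz) 0 (by simpa using interior_subset hz)
  have hgv : 0 < g v :=
    pos_of_mul_pos_right (by linarith [hg_int z hz, hg_ge z (interior_subset hz)]) hw
  refine ⟨(g v)⁻¹ • g, by simp [hgv.ne'], fun x hx y hy => ?_⟩
  simp only [FunLike.coe_smul, Pi.smul_apply, smul_eq_mul]
  rw [← sub_le_iff_le_add', ← mul_sub, inv_mul_le_iff₀ hgv]
  linarith [hg_le x hx, hg_ge y hy]

end Width

section Slice

variable {E F : Type*}

theorem Convex.slice {𝕜 : Type*} [Semiring 𝕜] [PartialOrder 𝕜] [AddCommGroup E] [Module 𝕜 E]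
    [AddCommGroup F] [Module 𝕜 F] {A : Set (E × F)} (hA : Convex 𝕜 A) (c : F) :
    Convex 𝕜 {x : E | (x, c) ∈ A} := by
  intro x hx y hy s t hs ht hst
  simpa [← add_smul, hst] using hA hx hy hs ht hst

variable [TopologicalSpace E] [TopologicalSpace F]

theorem IsCompact.slice [T1Space F] {A : Set (E × F)} (hA : IsCompact A) (c : F) :
    IsCompact {x : E | (x, c) ∈ A} := by
  convert (hA.inter_right (isClosed_univ.prod (isClosed_singleton (x := c)))).image
    continuous_fst using 1
  ext x
  simp

theorem measure_slice_pos_of_mem_interior [MeasurableSpace E] (μ : Measure E)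
    [μ.IsOpenPosMeasure] {A : Set (E × F)} {z : E × F} (hz : z ∈ interior A) :
    0 < μ {x : E | (x, z.2) ∈ A} :=
  ((isOpen_interior.preimage (Continuous.prodMk_left z.2)).measure_pos μ ⟨z.1, hz⟩).trans_le
    (measure_mono fun _ hx => interior_subset (s := A) hx)

end Slice

theorem ofReal_sub_le_volume_slice {A : Set (ℝ × ℝ)} (hA : Convex ℝ A) {c u v : ℝ}
    (hu : (u, c) ∈ A) (hv : (v, c) ∈ A) : ENNReal.ofReal (v - u) ≤ volume {t : ℝ | (t, c) ∈ A} :=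
  Real.volume_Icc ▸ measure_mono ((hA.slice c).ordConnected.out hu hv)

section Projection

variable {R E F : Type*} [Semiring R] [AddCommMonoid E] [Module R E] [AddCommMonoid F]
  [Module R F] {f : E × F →ₗ[R] E}

theorem range_inl_comp_of_apply_mk_zero (hf : ∀ x, f (x, 0) = x) :
    range (LinearMap.inl R E F ∘ₗ f) = {p : E × F | p.2 = 0} := by
  ext ⟨x, y⟩
  refine ⟨fun ⟨p, hp⟩ => by simp [← hp], fun hy => ⟨(x, 0), ?_⟩⟩
  simp_all

theorem image_inl_comp_of_apply_mk_zero (hf : ∀ x, f (x, 0) = x)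
    {A : Set (E × F)} (hA : MapsTo f A {x | (x, 0) ∈ A}) :
    (LinearMap.inl R E F ∘ₗ f) '' A = {p : E × F | p.2 = 0} ∩ A := by
  ext ⟨x, y⟩
  constructor
  · rintro ⟨p, hp, hpxy⟩
    rw [← hpxy]
    exact ⟨rfl, hA hp⟩
  · rintro ⟨rfl, hx⟩
    exact ⟨(x, 0), hx, by simp [hf]⟩

end Projection

theorem oblique_projection_onto_maximal_slice (A : Set (ℝ × ℝ))
    (hA : IsConvexBody A)
    (hmax : ∀ c : ℝ, volume {t : ℝ | (t, c) ∈ A} ≤ volume {t : ℝ | (t, (0:ℝ)) ∈ A}) :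
    ∃ π : (ℝ × ℝ) →ₗ[ℝ] (ℝ × ℝ),
      Set.range π = {p : ℝ × ℝ | p.2 = 0} ∧
      π '' A = {p : ℝ × ℝ | p.2 = 0} ∩ A := by
  obtain ⟨hconv, hcomp, z, hz⟩ := hA
  have hne : {t : ℝ | (t, (0 : ℝ)) ∈ A}.Nonempty := nonempty_of_measure_ne_zero
    ((measure_slice_pos_of_mem_interior volume hz).trans_le (hmax _)).ne'
  obtain ⟨a, b, hS⟩ : ∃ a b : ℝ, {t : ℝ | (t, (0 : ℝ)) ∈ A} = Icc a b :=
    ⟨_, _, eq_Icc_of_connected_compact ((hconv.slice 0).isConnected hne) (hcomp.slice 0)⟩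
  have hab : a ≤ b := nonempty_Icc.1 (hS ▸ hne)
  have hchord : ∀ x ∈ A, ∀ t : ℝ, x + t • ((1 : ℝ), (0 : ℝ)) ∈ A → t ≤ b - a := by
    rintro ⟨x, c⟩ hx t hxt
    have := (ofReal_sub_le_volume_slice hconv hx (by simpa using hxt)).trans (hmax c)
    rwa [hS, Real.volume_Icc, add_sub_cancel_left,
      ENNReal.ofReal_le_ofReal_iff (sub_nonneg.2 hab)] at this
  obtain ⟨f, hf1, hf⟩ := exists_width_le_of_chord_le hconv ⟨z, hz⟩ hchord
  have hf_axis : ∀ t : ℝ, f (t, 0) = t := fun t => by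
    simpa [hf1] using f.map_smul t ((1 : ℝ), (0 : ℝ))
  have ha : (a, (0 : ℝ)) ∈ A := show a ∈ {t : ℝ | (t, (0 : ℝ)) ∈ A} from hS ▸ left_mem_Icc.2 hab
  have hb : (b, (0 : ℝ)) ∈ A := show b ∈ {t : ℝ | (t, (0 : ℝ)) ∈ A} from hS ▸ right_mem_Icc.2 hab
  have hfA : MapsTo f A {t : ℝ | (t, (0 : ℝ)) ∈ A} := fun p hp => by
    rw [hS]
    constructor <;> linarith [hf p hp _ ha, hf _ hb p hp, hf_axis a, hf_axis b]
  exact ⟨_, range_inl_comp_of_apply_mk_zero hf_axis, image_inl_comp_of_apply_mk_zero hf_axis hfA⟩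
end
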